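/- The function ψ(t) = (1/2)(2t² + 1/t² − 5) + e^{1/t−1} is exponentially convex on (0,∞): for all t₁, t₂ > 0, ψ(√(t₁t₂)) ≤ (1/2)(ψ(t₁) + ψ(t₂)). -/
import Mathlib


noncomputable def psi (t : ℝ) : ℝ :=
  (1/2) * (2*t^2 + 1/t^2 - 5) + Real.exp (1/t - 1)

theorem stmt_9 : ∀ t₁ t₂ : ℝ, 0 < t₁ → 0 < t₂ →
    psi (Real.sqrt (t₁ * t₂)) ≤ (1/2) * (psi t₁ + psi t₂) := by
  intro t₁ t₂ h₁ h₂
  have hprod : (0:ℝ) < t₁ * t₂ := mul_pos h₁ h₂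
  have hs : 0 < Real.sqrt (t₁ * t₂) := Real.sqrt_pos.mpr hprod
  have hsq : (Real.sqrt (t₁ * t₂))^2 = t₁ * t₂ := Real.sq_sqrt hprod.le
  have hmul : (1/t₁) * (1/t₂) = 1/(t₁*t₂) := by rw [div_mul_div_comm, one_mul]
  -- AM-GM for 1/sqrt
  have hle : (1/t₁) * (1/t₂) ≤ ((1/t₁ + 1/t₂)/2)^2 := by nlinarith [sq_nonneg (1/t₁ - 1/t₂)]
  have hinv : 1 / Real.sqrt (t₁*t₂) ≤ (1/t₁ + 1/t₂)/2 := by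
    have h1 : Real.sqrt ((1/t₁) * (1/t₂)) ≤ (1/t₁ + 1/t₂)/2 := by
      calc Real.sqrt ((1/t₁) * (1/t₂)) ≤ Real.sqrt (((1/t₁ + 1/t₂)/2)^2) :=
            Real.sqrt_le_sqrt hle
        _ = (1/t₁ + 1/t₂)/2 := Real.sqrt_sq (by positivity)
    rw [hmul, one_div, Real.sqrt_inv, ← one_div] at h1
    exact h1
  have e1 : Real.exp (1/Real.sqrt (t₁*t₂) - 1) ≤ Real.exp ((1/t₁ + 1/t₂)/2 - 1) :=
    Real.exp_le_exp.mpr (by linarith)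
  have ha : Real.exp ((1/t₁-1)/2)^2 = Real.exp (1/t₁-1) := by
    rw [sq, ← Real.exp_add]; ring_nf
  have hb : Real.exp ((1/t₂-1)/2)^2 = Real.exp (1/t₂-1) := by
    rw [sq, ← Real.exp_add]; ring_nf
  have hab : Real.exp ((1/t₁-1)/2) * Real.exp ((1/t₂-1)/2) = Real.exp ((1/t₁ + 1/t₂)/2 - 1) := by
    rw [← Real.exp_add]; ring_nf
  have e2 : Real.exp ((1/t₁ + 1/t₂)/2 - 1) ≤ (Real.exp (1/t₁-1) + Real.exp (1/t₂-1))/2 := by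
    nlinarith [sq_nonneg (Real.exp ((1/t₁-1)/2) - Real.exp ((1/t₂-1)/2))]
  have p1 : 2*(t₁*t₂) ≤ t₁^2 + t₂^2 := by nlinarith [sq_nonneg (t₁ - t₂)]
  have p2 : 1/(t₁*t₂) ≤ (1/t₁^2 + 1/t₂^2)/2 := by
    have : (1/t₁)^2 = 1/t₁^2 := by rw [div_pow, one_pow]
    have : (1/t₂)^2 = 1/t₂^2 := by rw [div_pow, one_pow]
    nlinarith [sq_nonneg (1/t₁ - 1/t₂), hmul]
  unfold psi
  rw [hsq]
  linarith [e1.trans e2]
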